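/- arXiv:2603.27081 — 4 statements merged into one kernel-verified Lean document; each statement's English description precedes it below -/
import Mathlib

section
/- Let n ≥ 2 and let h : ℝ^n → ℝ be continuous and convex on the simplex Δ_n and Fréchet differentiable (in the ambient space ℝ^n) at a point x₀ in the relative interior Δ_n°. Then for any y ∈ ℝ^n, the point x₀ maximizes the function x ↦ ⟨x, y⟩ − h(x) over Δ_n if and only if y − ∇h(x₀) lies in span{𝟙}, i.e., if and only if P_H(y − ∇h(x₀)) = 0. -/
open Matrix MeasureTheory

noncomputable section

/-- The standard probability simplex in `ℝ^n`. -/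
def simplex (n : ℕ) : Set (Fin n → ℝ) := {x | (∀ i, 0 ≤ x i) ∧ ∑ i, x i = 1}

/-- The relative interior of the standard probability simplex. -/
def simplexInt (n : ℕ) : Set (Fin n → ℝ) := {x | (∀ i, 0 < x i) ∧ ∑ i, x i = 1}

/-- The all-ones vector `𝟙`. -/
def ones (n : ℕ) : Fin n → ℝ := fun _ => 1

/-- The orthogonal projection matrix `P_H = I - (1/n) 𝟙 𝟙ᵀ` onto `H = {z : ∑ i, z i = 0}`. -/
def PH (n : ℕ) : Matrix (Fin n) (Fin n) ℝ :=
  1 - (n : ℝ)⁻¹ • Matrix.of fun _ _ => (1 : ℝ)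

/-- The gradient (vector of partial derivatives) of `h`. -/
def grad {n : ℕ} (h : (Fin n → ℝ) → ℝ) (x : Fin n → ℝ) : Fin n → ℝ :=
  fun i => fderiv ℝ h x (Pi.single i 1)

/-- The Hessian matrix of `h`. -/
def hess {n : ℕ} (h : (Fin n → ℝ) → ℝ) (x : Fin n → ℝ) : Matrix (Fin n) (Fin n) ℝ :=
  Matrix.of fun i j =>
    fderiv ℝ (fun y => fderiv ℝ h y (Pi.single j 1)) x (Pi.single i 1)

/-! The objective `x ↦ ⟨x, y⟩ - h x` is concave on the simplex. Since `x₀` is interior, the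
line `x₀ + t v` stays in the simplex for small `|t|` whenever `v ∈ H`, so at a maximiser
Fermat's rule gives `⟨v, y - ∇h(x₀)⟩ = 0` for all `v ∈ H`, i.e. `y - ∇h(x₀) ∈ H^⊥ = span{𝟙}`.
Conversely, if `y - ∇h(x₀) ⊥ H`, then since `x - x₀ ∈ H` for every `x` in the simplex, the
subgradient inequality `h x ≥ h x₀ + ⟨x - x₀, ∇h(x₀)⟩` says exactly that `x₀` is a maximiser.
Finally `ker P_H = span{𝟙}` because `P_H g = g - (mean of g) 𝟙`. -/

theorem ConvexOn.add_fderiv_sub_le {E : Type*} [NormedAddCommGroup E] [NormedSpace ℝ E]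
    {s : Set E} {f : E → ℝ} {x y : E} (hf : ConvexOn ℝ s f) (hx : x ∈ s) (hy : y ∈ s)
    (hdiff : DifferentiableAt ℝ f x) : f x + fderiv ℝ f x (y - x) ≤ f y := by
  let L : ℝ →ᵃ[ℝ] E := AffineMap.lineMap x y
  have hline : ConvexOn ℝ (Set.Icc 0 1) (f ∘ L) :=
    (hf.comp_affineMap L).subset (fun _ ht => hf.1.lineMap_mem hx hy ht) (convex_Icc 0 1)
  have hderiv : HasDerivAt (f ∘ L) (fderiv ℝ f x (y - x)) 0 := by
    have hf' : HasFDerivAt f (fderiv ℝ f x) (L 0) := by simpa [L] using hdiff.hasFDerivAt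
    exact hf'.comp_hasDerivAt 0 AffineMap.hasDerivAt_lineMap
  have := hline.le_slope_of_hasDerivAt (by simp) (by simp) zero_lt_one hderiv
  simp only [slope, Function.comp_apply, AffineMap.lineMap_apply_zero,
    AffineMap.lineMap_apply_one, sub_zero, inv_one, vsub_eq_sub, one_smul, L] at this
  linarith

section Simplex

variable {n : ℕ}

theorem simplexInt_subset_simplex : simplexInt n ⊆ simplex n :=
  fun _ hx => ⟨fun i => (hx.1 i).le, hx.2⟩

theorem eventually_add_smul_mem_simplex {x₀ v : Fin n → ℝ} (hx₀ : x₀ ∈ simplexInt n)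
    (hv : ∑ i, v i = 0) : ∀ᶠ t in nhds (0 : ℝ), x₀ + t • v ∈ simplex n := by
  have hpos : ∀ i, ∀ᶠ t in nhds (0 : ℝ), 0 < x₀ i + t * v i := fun i =>
    Filter.Tendsto.eventually_const_lt (by simpa using hx₀.1 i)
      ((continuous_const.add (continuous_id.mul continuous_const)).tendsto' 0 _ rfl)
  filter_upwards [Filter.eventually_all.2 hpos] with t ht
  exact ⟨fun i => (ht i).le, by simp [Finset.sum_add_distrib, ← Finset.mul_sum, hv, hx₀.2]⟩

theorem fderiv_apply_eq_dotProduct_grad (h : (Fin n → ℝ) → ℝ) (x v : Fin n → ℝ) :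
    fderiv ℝ h x v = v ⬝ᵥ grad h x := by
  conv_lhs => rw [pi_eq_sum_univ' v]
  simp [dotProduct, grad]

theorem mem_span_ones_iff_forall_eq (g : Fin n → ℝ) :
    g ∈ Submodule.span ℝ {ones n} ↔ ∀ i j, g i = g j := by
  rw [Submodule.mem_span_singleton]
  constructor
  · rintro ⟨c, rfl⟩ i j
    rfl
  · intro hg
    rcases isEmpty_or_nonempty (Fin n) with _ | ⟨⟨i₀⟩⟩
    · exact ⟨0, Subsingleton.elim _ _⟩
    · exact ⟨g i₀, funext fun i => by simp [ones, hg i i₀]⟩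

theorem mem_span_ones_iff_forall_dotProduct_eq_zero (g : Fin n → ℝ) :
    g ∈ Submodule.span ℝ {ones n} ↔ ∀ v : Fin n → ℝ, ∑ i, v i = 0 → v ⬝ᵥ g = 0 := by
  constructor
  · rw [Submodule.mem_span_singleton]
    rintro ⟨c, rfl⟩ v hv
    rw [dotProduct_smul, show ones n = 1 from rfl, dotProduct_one, hv, smul_zero]
  · intro horth
    rw [mem_span_ones_iff_forall_eq]
    intro i j
    have := horth (Pi.single i 1 - Pi.single j 1) (by simp [Finset.sum_sub_distrib])
    rw [sub_dotProduct, single_one_dotProduct, single_one_dotProduct] at this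
    linarith

theorem PH_mulVec_apply (g : Fin n → ℝ) (i : Fin n) :
    (PH n *ᵥ g) i = g i - (n : ℝ)⁻¹ * ∑ j, g j := by
  simp [PH, Matrix.mulVec, dotProduct, Matrix.one_apply, sub_mul, ite_mul,
    Finset.sum_sub_distrib, Finset.mul_sum]

theorem PH_mulVec_eq_zero_iff (g : Fin n → ℝ) :
    PH n *ᵥ g = 0 ↔ g ∈ Submodule.span ℝ {ones n} := by
  rw [mem_span_ones_iff_forall_eq]
  constructor
  · intro hzero i j
    have hi := congrFun hzero i
    have hj := congrFun hzero j
    simp only [PH_mulVec_apply, Pi.zero_apply] at hi hj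
    linarith
  · intro hg
    funext i
    have hn : (n : ℝ) ≠ 0 := by exact_mod_cast i.pos.ne'
    have hsum : ∑ j, g j = n * g i := by simp [hg _ i]
    rw [PH_mulVec_apply, hsum, inv_mul_cancel_left₀ hn, sub_self, Pi.zero_apply]

theorem dotProduct_sub_grad_eq_zero_of_isMaxOn {h : (Fin n → ℝ) → ℝ} {x₀ y v : Fin n → ℝ}
    (hx₀ : x₀ ∈ simplexInt n) (hdiff : DifferentiableAt ℝ h x₀)
    (hmax : IsMaxOn (fun x => x ⬝ᵥ y - h x) (simplex n) x₀) (hv : ∑ i, v i = 0) :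
    v ⬝ᵥ (y - grad h x₀) = 0 := by
  let ψ : ℝ → ℝ := fun t => (x₀ + t • v) ⬝ᵥ y - h (x₀ + t • v)
  have hlocal : IsLocalMax ψ 0 := by
    filter_upwards [eventually_add_smul_mem_simplex hx₀ hv] with t ht
    simpa [ψ] using hmax ht
  have hderiv : HasDerivAt ψ (v ⬝ᵥ y - fderiv ℝ h x₀ v) 0 := by
    have hline : HasDerivAt (fun t : ℝ => x₀ + t • v) v 0 := by
      simpa using ((hasDerivAt_id (0 : ℝ)).smul_const v).const_add x₀
    have hlinear : HasDerivAt (fun t : ℝ => (x₀ + t • v) ⬝ᵥ y) (v ⬝ᵥ y) 0 := by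
      simp only [add_dotProduct, smul_dotProduct, smul_eq_mul]
      simpa using ((hasDerivAt_id (0 : ℝ)).mul_const (v ⬝ᵥ y)).const_add (x₀ ⬝ᵥ y)
    have hf' : HasFDerivAt h (fderiv ℝ h x₀) (x₀ + (0 : ℝ) • v) := by
      simpa using hdiff.hasFDerivAt
    exact hlinear.sub (hf'.comp_hasDerivAt 0 hline)
  rw [dotProduct_sub, ← fderiv_apply_eq_dotProduct_grad]
  exact hlocal.hasDerivAt_eq_zero hderiv

theorem isMaxOn_of_dotProduct_sub_grad_eq_zero {h : (Fin n → ℝ) → ℝ} {x₀ y : Fin n → ℝ}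
    (hconv : ConvexOn ℝ (simplex n) h) (hx₀ : x₀ ∈ simplex n)
    (hdiff : DifferentiableAt ℝ h x₀)
    (horth : ∀ v : Fin n → ℝ, ∑ i, v i = 0 → v ⬝ᵥ (y - grad h x₀) = 0) :
    IsMaxOn (fun x => x ⬝ᵥ y - h x) (simplex n) x₀ := by
  intro x hx
  show x ⬝ᵥ y - h x ≤ x₀ ⬝ᵥ y - h x₀
  have hsub := hconv.add_fderiv_sub_le hx₀ hx hdiff
  have hzero := horth (x - x₀) (by simp [Finset.sum_sub_distrib, hx.2, hx₀.2])
  rw [fderiv_apply_eq_dotProduct_grad] at hsub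
  rw [dotProduct_sub, sub_dotProduct] at hzero
  linarith

end Simplex

theorem stmt0_general {n : ℕ} (h : (Fin n → ℝ) → ℝ)
    (hconv : ConvexOn ℝ (simplex n) h)
    (x₀ : Fin n → ℝ) (hx₀ : x₀ ∈ simplexInt n)
    (hdiff : DifferentiableAt ℝ h x₀) (y : Fin n → ℝ) :
    ((∀ x ∈ simplex n, x ⬝ᵥ y - h x ≤ x₀ ⬝ᵥ y - h x₀) ↔
      y - grad h x₀ ∈ Submodule.span ℝ {ones n}) ∧
    (y - grad h x₀ ∈ Submodule.span ℝ {ones n} ↔ PH n *ᵥ (y - grad h x₀) = 0) := by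
  refine ⟨?_, (PH_mulVec_eq_zero_iff _).symm⟩
  rw [mem_span_ones_iff_forall_dotProduct_eq_zero, ← isMaxOn_iff]
  exact ⟨fun hmax _ hv => dotProduct_sub_grad_eq_zero_of_isMaxOn hx₀ hdiff hmax hv,
    isMaxOn_of_dotProduct_sub_grad_eq_zero hconv (simplexInt_subset_simplex hx₀) hdiff⟩

/-- First-order optimality condition for FTRL choice maps: for `h`
continuous and convex on the simplex and Fréchet differentiable at an interior point `x₀`,
the point `x₀` maximizes `x ↦ ⟨x, y⟩ - h x` over the simplex iff `y - ∇h(x₀) ∈ span{𝟙}`,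
i.e. iff `P_H (y - ∇h(x₀)) = 0`. -/
theorem stmt0 {n : ℕ} (hn : 2 ≤ n) (h : (Fin n → ℝ) → ℝ)
    (hcont : ContinuousOn h (simplex n)) (hconv : ConvexOn ℝ (simplex n) h)
    (x₀ : Fin n → ℝ) (hx₀ : x₀ ∈ simplexInt n)
    (hdiff : DifferentiableAt ℝ h x₀) (y : Fin n → ℝ) :
    ((∀ x ∈ simplex n, x ⬝ᵥ y - h x ≤ x₀ ⬝ᵥ y - h x₀) ↔
      y - grad h x₀ ∈ Submodule.span ℝ {ones n}) ∧
    (y - grad h x₀ ∈ Submodule.span ℝ {ones n} ↔ PH n *ᵥ (y - grad h x₀) = 0) :=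
  stmt0_general h hconv x₀ hx₀ hdiff y
end
end

section
/- Let n ≥ 2, let h : ℝ^n → ℝ be twice continuously differentiable on an open set containing Δ_n° with Hessian positive definite on Δ_n°, and let M := {P_H ∇h(x) : x ∈ Δ_n°}. Let A ∈ ℝ^{n×m} and suppose rank(P_H A) < n − 1. Then for every z₀ ∈ M there exists z₁ ∈ M such that for no T ≥ 0 and no integrable control u : [0,T] → Δ_m does z₀ + ∫₀ᵀ P_H A u(s) ds = z₁; in particular the system ż = P_H A u on M is not controllable. -/
open Matrix MeasureTheory

noncomputable section

/-!
If `rank (P_H A) < n - 1`, some `c ≠ 0` with `∑ i, c i = 0` is orthogonal to the range of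
`P_H A`, so `c ⬝ᵥ z` is constant along every trajectory of `ż = P_H A u`. On `M` this
invariant reads `c ⬝ᵥ P_H ∇h(x) = Dh(x) c`, and positive definiteness of the Hessian makes
`t ↦ Dh(x₀ + t c) c` strictly increasing. Hence `z₁ = P_H ∇h(x₀ + t c)`, for a small `t > 0`
keeping `x₀ + t c` in the open simplex, carries a different value of the invariant than `z₀`.
-/

theorem Matrix.exists_ne_zero_sum_eq_zero_vecMul_eq_zero {K ι κ : Type*} [Field K] [Fintype ι]
    [Fintype κ] (B : Matrix ι κ K) (hB : B.rank + 1 < Fintype.card ι) :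
    ∃ c : ι → K, c ≠ 0 ∧ ∑ i, c i = 0 ∧ c ᵥ* B = 0 := by
  set σ : (ι → K) →ₗ[K] K := ∑ i, LinearMap.proj i
  have hN : B.rank + Module.finrank K (LinearMap.ker B.vecMulLinear) = Fintype.card ι := by
    rw [← rank_transpose, Matrix.rank, mulVecLin_transpose,
      LinearMap.finrank_range_add_finrank_ker, Module.finrank_fintype_fun_eq_card]
  have hS : Fintype.card ι ≤ 1 + Module.finrank K (LinearMap.ker σ) := by
    have hσ := LinearMap.finrank_range_add_finrank_ker σ
    have hrange := Submodule.finrank_le (LinearMap.range σ)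
    rw [Module.finrank_fintype_fun_eq_card] at hσ
    rw [Module.finrank_self] at hrange
    omega
  have hNS : ¬ Disjoint (LinearMap.ker B.vecMulLinear) (LinearMap.ker σ) := fun hdisj => by
    have hle := Submodule.finrank_add_finrank_le_of_disjoint hdisj
    rw [Module.finrank_fintype_fun_eq_card] at hle
    omega
  rw [Submodule.disjoint_def] at hNS
  push Not at hNS
  obtain ⟨c, hcN, hcS, hc0⟩ := hNS
  exact ⟨c, hc0, by simpa [σ] using hcS, hcN⟩

theorem vecMul_PH_of_sum_eq_zero {n : ℕ} {c : Fin n → ℝ} (hc : ∑ i, c i = 0) :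
    c ᵥ* PH n = c := by
  have hones : c ᵥ* (Matrix.of fun _ _ => 1 : Matrix (Fin n) (Fin n) ℝ) = 0 := by
    ext j
    simp [vecMul, dotProduct, hc]
  rw [PH, vecMul_sub, vecMul_one, vecMul_smul, hones, smul_zero, sub_zero]

theorem dotProduct_PH_mulVec {n : ℕ} {c : Fin n → ℝ} (hc : ∑ i, c i = 0) (v : Fin n → ℝ) :
    c ⬝ᵥ (PH n *ᵥ v) = c ⬝ᵥ v := by
  rw [dotProduct_mulVec, vecMul_PH_of_sum_eq_zero hc]

theorem dotProduct_grad {n : ℕ} (h : (Fin n → ℝ) → ℝ) (x c : Fin n → ℝ) :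
    c ⬝ᵥ grad h x = fderiv ℝ h x c := by
  conv_rhs => rw [pi_eq_sum_univ' c]
  simp [grad, dotProduct]

theorem fderiv_fderiv_apply_eq_dotProduct_hess {n : ℕ} {h : (Fin n → ℝ) → ℝ} {y : Fin n → ℝ}
    (hy : DifferentiableAt ℝ (fderiv ℝ h) y) (v : Fin n → ℝ) :
    fderiv ℝ (fderiv ℝ h) y v v = v ⬝ᵥ (hess h y *ᵥ v) := by
  set B : (Fin n → ℝ) →ₗ[ℝ] (Fin n → ℝ) →ₗ[ℝ] ℝ :=
    (ContinuousLinearMap.coeLM ℝ).comp (fderiv ℝ (fderiv ℝ h) y).toLinearMap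
  have hB : LinearMap.toMatrix₂' ℝ B = hess h y := by
    ext i j
    rw [LinearMap.toMatrix₂'_apply, hess, of_apply,
      fderiv_clm_apply hy (differentiableAt_const _)]
    simp [B]
  rw [← toLinearMap₂'_apply', ← hB, Matrix.toLinearMap₂'_toMatrix']
  rfl

theorem fderiv_apply_lt_fderiv_add_apply {E : Type*} [NormedAddCommGroup E] [NormedSpace ℝ E]
    {f : E → ℝ} {S : Set E} (hS : Convex ℝ S)
    (hf : ∀ y ∈ S, DifferentiableAt ℝ (fderiv ℝ f) y) {x v : E}
    (hpos : ∀ y ∈ S, 0 < fderiv ℝ (fderiv ℝ f) y v v) (hx : x ∈ S) (hxv : x + v ∈ S) :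
    fderiv ℝ f x v < fderiv ℝ f (x + v) v := by
  have hseg : ∀ t ∈ Set.Icc (0 : ℝ) 1, x + t • v ∈ S := fun t ht => hS.add_smul_mem hx hxv ht
  have hderiv : ∀ t ∈ Set.Icc (0 : ℝ) 1, HasDerivAt (fun s : ℝ => fderiv ℝ f (x + s • v) v)
      (fderiv ℝ (fderiv ℝ f) (x + t • v) v v) t := by
    intro t ht
    have hline : HasDerivAt (fun s : ℝ => x + s • v) v t := by
      simpa using ((hasDerivAt_id t).smul_const v).const_add x
    have hF : HasFDerivAt (fderiv ℝ f) (fderiv ℝ (fderiv ℝ f) (x + t • v)) (x + t • v) :=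
      (hf _ (hseg t ht)).hasFDerivAt
    have hcomp := hF.comp_hasDerivAt t hline
    have happ := hcomp.clm_apply (hasDerivAt_const t v)
    rwa [map_zero, add_zero] at happ
  have hmono : StrictMonoOn (fun s : ℝ => fderiv ℝ f (x + s • v) v) (Set.Icc 0 1) := by
    refine strictMonoOn_of_deriv_pos (convex_Icc 0 1)
      (fun t ht => (hderiv t ht).continuousAt.continuousWithinAt) fun t ht => ?_
    rw [interior_Icc] at ht
    rw [(hderiv t (Set.Ioo_subset_Icc_self ht)).deriv]
    exact hpos _ (hseg t (Set.Ioo_subset_Icc_self ht))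
  simpa using hmono (Set.left_mem_Icc.2 zero_le_one) (Set.right_mem_Icc.2 zero_le_one) one_pos

theorem convex_simplexInt (n : ℕ) : Convex ℝ (simplexInt n) := by
  intro x hx y hy a b ha hb hab
  refine ⟨fun i => convex_Ioi (0 : ℝ) (hx.1 i) (hy.1 i) ha hb hab, ?_⟩
  simp [Finset.sum_add_distrib, ← Finset.mul_sum, hx.2, hy.2, hab]

theorem exists_pos_add_smul_mem_simplexInt {n : ℕ} {x : Fin n → ℝ} (hx : x ∈ simplexInt n)
    {c : Fin n → ℝ} (hc : ∑ i, c i = 0) : ∃ t : ℝ, 0 < t ∧ x + t • c ∈ simplexInt n := by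
  have hpos : ∀ᶠ t in nhds (0 : ℝ), ∀ i, 0 < x i + t * c i :=
    Filter.eventually_all.2 fun i =>
      ((continuous_const.add (continuous_id.mul continuous_const)).tendsto 0).eventually
        (lt_mem_nhds (by simpa using hx.1 i))
  obtain ⟨t, hxt, ht⟩ :=
    ((hpos.filter_mono nhdsWithin_le_nhds).and (self_mem_nhdsWithin (s := Set.Ioi (0 : ℝ)))).exists
  refine ⟨t, ht, hxt, ?_⟩
  simp [Finset.sum_add_distrib, ← Finset.mul_sum, hx.2, hc]

theorem intervalIntegral_mulVec {ι κ : Type*} [Fintype ι] [Fintype κ] (B : Matrix ι κ ℝ)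
    {u : ℝ → κ → ℝ} {μ : Measure ℝ} {a b : ℝ} (hu : IntervalIntegrable u μ a b) :
    ∫ s in a..b, B *ᵥ u s ∂μ = B *ᵥ ∫ s in a..b, u s ∂μ :=
  (LinearMap.toContinuousLinearMap B.mulVecLin).intervalIntegral_comp_comm hu

theorem stmt7_general {n m : ℕ} (h : (Fin n → ℝ) → ℝ)
    (U : Set (Fin n → ℝ)) (hU : IsOpen U) (hUsub : simplexInt n ⊆ U)
    (hC2 : ContDiffOn ℝ 2 h U)
    (hpos : ∀ x ∈ simplexInt n, ∀ v : Fin n → ℝ, v ≠ 0 → 0 < v ⬝ᵥ (hess h x *ᵥ v))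
    (A : Matrix (Fin n) (Fin m) ℝ) (hrank : (PH n * A).rank < n - 1) :
    ∀ z₀ ∈ (fun x => PH n *ᵥ grad h x) '' simplexInt n,
      ∃ z₁ ∈ (fun x => PH n *ᵥ grad h x) '' simplexInt n,
        ∀ T : ℝ, 0 ≤ T → ∀ u : ℝ → Fin m → ℝ,
          IntervalIntegrable u volume 0 T →
          (∀ s ∈ Set.Icc (0 : ℝ) T, u s ∈ simplex m) →
          z₀ + (∫ s in (0:ℝ)..T, PH n *ᵥ (A *ᵥ u s)) ≠ z₁ := by
  rintro _ ⟨x₀, hx₀, rfl⟩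
  obtain ⟨c, hc0, hcsum, hcB⟩ :=
    (PH n * A).exists_ne_zero_sum_eq_zero_vecMul_eq_zero (by rw [Fintype.card_fin]; omega)
  obtain ⟨t, ht, hx₁⟩ := exists_pos_add_smul_mem_simplexInt hx₀ hcsum
  refine ⟨_, ⟨x₀ + t • c, hx₁, rfl⟩, fun T _ u hu _ hreach => ?_⟩
  have hd : ∀ y ∈ simplexInt n, DifferentiableAt ℝ (fderiv ℝ h) y := fun y hy =>
    ((hC2.contDiffAt (hU.mem_nhds (hUsub hy))).fderiv_right (m := 1) le_rfl).differentiableAt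
      one_ne_zero
  have hlt : fderiv ℝ h x₀ (t • c) < fderiv ℝ h (x₀ + t • c) (t • c) :=
    fderiv_apply_lt_fderiv_add_apply (convex_simplexInt n) hd (fun y hy => by
      rw [fderiv_fderiv_apply_eq_dotProduct_hess (hd y hy)]
      exact hpos y hy _ (smul_ne_zero ht.ne' hc0)) hx₀ hx₁
  rw [map_smul, map_smul, smul_eq_mul, smul_eq_mul] at hlt
  have hconst : c ⬝ᵥ ∫ s in (0:ℝ)..T, PH n *ᵥ (A *ᵥ u s) = 0 := by
    simp_rw [mulVec_mulVec]
    rw [intervalIntegral_mulVec _ hu, dotProduct_mulVec, hcB, zero_dotProduct]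
  have hdot := congrArg (c ⬝ᵥ ·) hreach
  simp only [dotProduct_add, hconst, add_zero, dotProduct_PH_mulVec hcsum, dotProduct_grad] at hdot
  exact (lt_of_mul_lt_mul_left hlt ht.le).ne hdot

/-- (Necessity of the rank condition in Theorem 1 of the paper.) If
`rank(P_H A) < n - 1`, then from every `z₀ ∈ M` some `z₁ ∈ M` is unreachable: for no
time horizon `T ≥ 0` and no integrable simplex-valued control `u` does
`z₀ + ∫₀ᵀ P_H A u(s) ds = z₁`. In particular `ż = P_H A u` is not controllable on `M`. -/
theorem stmt7 {n m : ℕ} (hn : 2 ≤ n) (h : (Fin n → ℝ) → ℝ)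
    (U : Set (Fin n → ℝ)) (hU : IsOpen U) (hUsub : simplexInt n ⊆ U)
    (hC2 : ContDiffOn ℝ 2 h U)
    (hpos : ∀ x ∈ simplexInt n, ∀ v : Fin n → ℝ, v ≠ 0 → 0 < v ⬝ᵥ (hess h x *ᵥ v))
    (A : Matrix (Fin n) (Fin m) ℝ) (hrank : (PH n * A).rank < n - 1) :
    ∀ z₀ ∈ (fun x => PH n *ᵥ grad h x) '' simplexInt n,
      ∃ z₁ ∈ (fun x => PH n *ᵥ grad h x) '' simplexInt n,
        ∀ T : ℝ, 0 ≤ T → ∀ u : ℝ → Fin m → ℝ,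
          IntervalIntegrable u volume 0 T →
          (∀ s ∈ Set.Icc (0 : ℝ) T, u s ∈ simplex m) →
          z₀ + (∫ s in (0:ℝ)..T, PH n *ᵥ (A *ᵥ u s)) ≠ z₁ :=
  stmt7_general h U hU hUsub hC2 hpos A hrank
end
end

section
/- Let A ∈ ℝ^{n×m} and suppose there is no fully mixed neutralizing strategy, i.e., there is no u₀ in the relative interior Δ_m° of the simplex Δ_m with A u₀ ∈ span{𝟙}. Then there exists a nonzero vector w ∈ H such that ⟨w, P_H A u⟩ ≥ 0 for all u ∈ Δ_m. -/
open Matrix MeasureTheory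

noncomputable section

/-! Put `B = P_H A`. Since `ker P_H = span 𝟙`, the hypothesis says, after rescaling into `Δ_m°`,
that no strictly positive vector lies in `ker B`. Separating the open positive orthant from
`ker B` gives Stiemke's alternative: some `y` has `yᵀB ≥ 0` and `yᵀB ≠ 0`. Then `wᵀ = yᵀP_H` works:
`P_H 𝟙 = 0` puts `w` in `H`, and `P_H² = P_H` gives `wᵀB = yᵀB`. For `m = 0` the simplex is
empty and any nonzero `w ∈ H` will do. -/

open Set

lemma nonpos_of_forall_pos_mul_le {x c : ℝ} (h : ∀ t : ℝ, 0 < t → t * x ≤ c) : x ≤ 0 := by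
  by_contra! hx
  have := h ((|c| + 1) / x) (by positivity)
  rw [div_mul_cancel₀ _ hx.ne'] at this
  linarith [le_abs_self c]

lemma exists_ne_zero_sum_eq_zero {ι : Type*} [Fintype ι] [Nontrivial ι] :
    ∃ w : ι → ℝ, w ≠ 0 ∧ ∑ i, w i = 0 := by
  classical
  obtain ⟨i, j, hij⟩ := exists_pair_ne ι
  refine ⟨Pi.single i 1 - Pi.single j 1, fun h => ?_, by simp [Finset.sum_sub_distrib]⟩
  simpa [hij] using congrFun h i

namespace Matrix

variable {ι κ : Type*} [Fintype ι] [Fintype κ]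

lemma exists_eq_vecMul_dotProduct_of_ker_le (B : Matrix κ ι ℝ) (φ : (ι → ℝ) →ₗ[ℝ] ℝ)
    (hφ : ∀ u, B *ᵥ u = 0 → φ u = 0) : ∃ c : κ → ℝ, ∀ u, φ u = (c ᵥ* B) ⬝ᵥ u := by
  set L : κ → (ι → ℝ) →ₗ[ℝ] ℝ := fun k => (LinearMap.proj k).comp B.mulVecLin
  have hker : ⨅ k, LinearMap.ker (L k) ≤ LinearMap.ker φ := fun u hu =>
    hφ u (funext fun k => (Submodule.mem_iInf _).1 hu k)
  obtain ⟨c, hc⟩ :=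
    (Submodule.mem_span_range_iff_exists_fun ℝ).1 (mem_span_of_iInf_ker_le_ker hker)
  refine ⟨c, fun u => ?_⟩
  rw [← dotProduct_mulVec, ← hc]
  simp [L, dotProduct]

theorem exists_nonneg_vecMul_ne_zero (B : Matrix κ ι ℝ)
    (hB : ∀ u : ι → ℝ, (∀ i, 0 < u i) → B *ᵥ u ≠ 0) :
    ∃ y : κ → ℝ, 0 ≤ y ᵥ* B ∧ y ᵥ* B ≠ 0 := by
  classical
  have hint : interior (Ici (0 : ι → ℝ)) = univ.pi fun _ => Ioi 0 := by
    rw [← pi_univ_Ici, interior_pi_set finite_univ]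
    simp only [Pi.zero_apply, interior_Ici]
  obtain ⟨f, r, hf, hQ, hker⟩ := geometric_hahn_banach_of_nonempty_interior (convex_Ici 0)
    (LinearMap.ker B.mulVecLin).convex
    (disjoint_left.2 fun u hu hBu => hB u (by simpa [hint] using hu) hBu)
    ⟨1, by simp [hint]⟩ ⟨0, zero_mem _⟩
  have hf_nonpos : ∀ a : ι → ℝ, 0 ≤ a → f a ≤ 0 := fun a ha =>
    nonpos_of_forall_pos_mul_le fun t ht => by
      simpa using hQ (t • a) (smul_nonneg ht.le ha)
  have hf_ker_nonneg : ∀ b, B *ᵥ b = 0 → 0 ≤ f b := fun b hb =>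
    neg_nonpos.1 <| nonpos_of_forall_pos_mul_le (c := -r) fun t _ => by
      have := hker (t • b) (by simp [hb])
      simp only [map_smul, smul_eq_mul] at this
      linarith
  have hf_ker : ∀ u, B *ᵥ u = 0 → f u = 0 := fun u hu =>
    le_antisymm (by simpa using hf_ker_nonneg (-u) (by simp [mulVec_neg, hu]))
      (hf_ker_nonneg u hu)
  obtain ⟨c, hc⟩ := B.exists_eq_vecMul_dotProduct_of_ker_le f.toLinearMap hf_ker
  simp only [ContinuousLinearMap.coe_coe] at hc
  refine ⟨-c, fun i => ?_, fun h => hf ?_⟩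
  · have := hf_nonpos (Pi.single i 1) (by simp)
    rw [hc, dotProduct_single, mul_one] at this
    simpa [neg_vecMul] using this
  · ext u
    rw [hc, ← neg_neg c, neg_vecMul, h]
    simp

end Matrix

lemma PH_mulVec {n : ℕ} (y : Fin n → ℝ) :
    PH n *ᵥ y = y - ((n : ℝ)⁻¹ * ∑ i, y i) • ones n := by
  ext i
  simp [PH, mulVec, dotProduct, ones, sub_mul, Finset.sum_sub_distrib, Matrix.one_apply,
    ← Finset.mul_sum]

lemma PH_mulVec_ones (n : ℕ) : PH n *ᵥ ones n = 0 := by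
  rcases Nat.eq_zero_or_pos n with rfl | hn
  · exact Subsingleton.elim _ _
  · simp [PH_mulVec, ones, hn.ne']

lemma PH_mul_self (n : ℕ) : PH n * PH n = PH n := by
  refine Matrix.toLin'.injective (LinearMap.ext fun y => ?_)
  simp only [Matrix.toLin'_apply, ← mulVec_mulVec]
  conv_lhs => rw [PH_mulVec y, mulVec_sub, mulVec_smul, PH_mulVec_ones, smul_zero, sub_zero]

lemma sum_vecMul_PH {n : ℕ} (v : Fin n → ℝ) : ∑ j, (v ᵥ* PH n) j = 0 := by
  rw [← dotProduct_one, ← dotProduct_mulVec]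
  exact (dotProduct_zero v) ▸ congrArg (v ⬝ᵥ ·) (PH_mulVec_ones n)

lemma exists_eq_smul_ones_of_PH_mulVec_eq_zero {n : ℕ} {y : Fin n → ℝ} (h : PH n *ᵥ y = 0) :
    ∃ k : ℝ, y = k • ones n :=
  ⟨_, sub_eq_zero.1 (PH_mulVec y ▸ h)⟩

lemma inv_sum_smul_mem_simplexInt {m : ℕ} (hm : 0 < m) {u : Fin m → ℝ} (hu : ∀ i, 0 < u i) :
    (∑ i, u i)⁻¹ • u ∈ simplexInt m := by
  have hsum : 0 < ∑ i, u i := Finset.sum_pos (fun i _ => hu i) ⟨⟨0, hm⟩, Finset.mem_univ _⟩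
  refine ⟨fun i => by simpa using mul_pos (inv_pos.2 hsum) (hu i), ?_⟩
  simp [← Finset.mul_sum, hsum.ne']

/-- (Separation step in the necessity proof of Theorem 1 of the paper.)
If there is no fully mixed neutralizing strategy, i.e. no `u₀ ∈ Δ_m°` with
`A u₀ = k 𝟙`, then there is a nonzero `w ∈ H` with `⟨w, P_H A u⟩ ≥ 0` for all `u ∈ Δ_m`. -/
theorem stmt8 {n m : ℕ} (hn : 2 ≤ n) (A : Matrix (Fin n) (Fin m) ℝ)
    (hno : ¬ ∃ u₀ ∈ simplexInt m, ∃ k : ℝ, A *ᵥ u₀ = k • ones n) :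
    ∃ w : Fin n → ℝ, w ≠ 0 ∧ (∑ i, w i) = 0 ∧
      ∀ u ∈ simplex m, 0 ≤ w ⬝ᵥ (PH n *ᵥ (A *ᵥ u)) := by
  rcases Nat.eq_zero_or_pos m with rfl | hm
  · have : Nontrivial (Fin n) := Fin.nontrivial_iff_two_le.2 hn
    obtain ⟨w, hw, hw_sum⟩ := exists_ne_zero_sum_eq_zero (ι := Fin n)
    exact ⟨w, hw, hw_sum, fun u hu => by simp [simplex] at hu⟩
  have hB : ∀ u : Fin m → ℝ, (∀ i, 0 < u i) → (PH n * A) *ᵥ u ≠ 0 := by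
    intro u hu hBu
    obtain ⟨k, hk⟩ :=
      exists_eq_smul_ones_of_PH_mulVec_eq_zero (y := A *ᵥ u) (by rwa [mulVec_mulVec])
    exact hno ⟨_, inv_sum_smul_mem_simplexInt hm hu, (∑ i, u i)⁻¹ * k,
      by rw [mulVec_smul, hk, smul_smul]⟩
  obtain ⟨v, hv_nonneg, hv_ne⟩ := (PH n * A).exists_nonneg_vecMul_ne_zero hB
  refine ⟨v ᵥ* PH n, fun h => hv_ne ?_, sum_vecMul_PH v, fun u hu => ?_⟩
  · rw [← vecMul_vecMul, h, zero_vecMul]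
  calc 0 ≤ (v ᵥ* (PH n * A)) ⬝ᵥ u := dotProduct_nonneg_of_nonneg hv_nonneg hu.1
    _ = (v ᵥ* PH n) ⬝ᵥ (PH n *ᵥ (A *ᵥ u)) := by
      rw [← dotProduct_mulVec, ← dotProduct_mulVec, mulVec_mulVec, mulVec_mulVec, PH_mul_self]
end
end

section
/- Define the smooth vector fields η₁, η₂ : ℝ² → ℝ² by η₁(α, β) = (α(1−α), −β(1−β)) and η₂(α, β) = ((12β−7)α(1−α), (4−12α)β(1−β)). Then their Lie bracket satisfies [η₁, η₂](α, β) = −12αβ(1−α)(1−β)·(1, 1) for all (α, β) ∈ ℝ², and for every (α, β) with 0 < α < 1 and 0 < β < 1, the determinant of the 2×2 matrix with columns η₁(α, β) and [η₁, η₂](α, β) equals −12αβ(1−α)(1−β)(α(1−α) + β(1−β)), which is nonzero; hence η₁(α, β) and [η₁, η₂](α, β) are linearly independent for all (α, β) ∈ (0,1)². -/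
open Matrix MeasureTheory

noncomputable section

/-- The Lie bracket `[X, Y](x) = DY(x) X(x) - DX(x) Y(x)` of two vector fields on `ℝ^d`. -/
def lieBracket {d : ℕ} (X Y : (Fin d → ℝ) → (Fin d → ℝ)) (x : Fin d → ℝ) : Fin d → ℝ :=
  fderiv ℝ Y x (X x) - fderiv ℝ X x (Y x)

/-- The vector field `η₁(α, β) = (α(1-α), -β(1-β))`. -/
def eta1 : (Fin 2 → ℝ) → (Fin 2 → ℝ) :=
  fun p => ![p 0 * (1 - p 0), -(p 1 * (1 - p 1))]

/-- The vector field `η₂(α, β) = ((12β-7)α(1-α), (4-12α)β(1-β))`. -/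
def eta2 : (Fin 2 → ℝ) → (Fin 2 → ℝ) :=
  fun p => ![(12 * p 1 - 7) * (p 0 * (1 - p 0)), (4 - 12 * p 0) * (p 1 * (1 - p 1))]

/-!
Every component of `η₁` and `η₂` carries a logistic factor `α(1-α)` or `β(1-β)`, so the
Jacobians are explicit. In the bracket the terms with `1-2α` and `1-2β` cancel, leaving
`[η₁, η₂] = -12αβ(1-α)(1-β)·(1,1)`. Against `η₁ = (α(1-α), -β(1-β))` the determinant therefore
acquires the factor `α(1-α) + β(1-β)`, which is positive on the open square.
-/

open ContinuousLinearMap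

theorem linearIndependent_pair_iff_det_ne_zero {K : Type*} [Field K] (u v : Fin 2 → K) :
    LinearIndependent K ![u, v] ↔ !![u 0, v 0; u 1, v 1].det ≠ 0 := by
  change LinearIndependent K (Matrix.of ![u, v]).row ↔ _
  rw [linearIndependent_rows_iff_isUnit, isUnit_iff_isUnit_det, isUnit_iff_ne_zero,
    det_fin_two, det_fin_two_of]
  simp [mul_comm]

section Jacobian

variable {ι E : Type*} [Fintype ι] [NormedAddCommGroup E] [NormedSpace ℝ E]

theorem hasFDerivAt_apply_mul_one_sub_apply (i : ι) (p : ι → ℝ) :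
    HasFDerivAt (fun q : ι → ℝ => q i * (1 - q i))
      ((1 - 2 * p i) • (proj i : (ι → ℝ) →L[ℝ] ℝ)) p := by
  refine ((hasFDerivAt_apply i p).mul
    ((hasFDerivAt_const 1 p).sub (hasFDerivAt_apply i p))).congr_fderiv ?_
  ext v
  simp only [zero_sub, smul_neg, _root_.add_apply, _root_.neg_apply, _root_.smul_apply, proj_apply,
    smul_eq_mul]
  ring

theorem HasFDerivAt.vecCons_two {f g : E → ℝ} {f' g' : E →L[ℝ] ℝ} {x : E}
    (hf : HasFDerivAt f f' x) (hg : HasFDerivAt g g' x) :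
    HasFDerivAt (fun y => ![f y, g y]) (pi ![f', g']) x := by
  refine hasFDerivAt_pi.2 fun i => ?_
  fin_cases i
  exacts [hf, hg]

end Jacobian

theorem fderiv_eta1_apply (p v : Fin 2 → ℝ) :
    fderiv ℝ eta1 p v = ![(1 - 2 * p 0) * v 0, -((1 - 2 * p 1) * v 1)] := by
  have h : HasFDerivAt eta1 _ p := (hasFDerivAt_apply_mul_one_sub_apply 0 p).vecCons_two
    (hasFDerivAt_apply_mul_one_sub_apply 1 p).neg
  rw [h.fderiv]
  ext i
  fin_cases i <;> simp

theorem fderiv_eta2_apply (p v : Fin 2 → ℝ) :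
    fderiv ℝ eta2 p v =
      ![(12 * p 1 - 7) * (1 - 2 * p 0) * v 0 + 12 * (p 0 * (1 - p 0)) * v 1,
        -12 * (p 1 * (1 - p 1)) * v 0 + (4 - 12 * p 0) * (1 - 2 * p 1) * v 1] := by
  have h : HasFDerivAt eta2 _ p :=
    ((((hasFDerivAt_apply 1 p).const_mul 12).sub_const 7).mul
        (hasFDerivAt_apply_mul_one_sub_apply 0 p)).vecCons_two
      ((((hasFDerivAt_apply 0 p).const_mul 12).const_sub 4).mul
        (hasFDerivAt_apply_mul_one_sub_apply 1 p))
  rw [h.fderiv]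
  ext i
  fin_cases i <;>
    simp only [Fin.isValue, Fin.zero_eta, Fin.mk_one, coe_pi', cons_val_zero, cons_val_one,
      cons_val_fin_one, _root_.add_apply, _root_.smul_apply, _root_.neg_apply, proj_apply,
      smul_eq_mul] <;> ring

theorem lieBracket_eta1_eta2 (p : Fin 2 → ℝ) :
    lieBracket eta1 eta2 p = (-12 * p 0 * p 1 * (1 - p 0) * (1 - p 1)) • ![1, 1] := by
  ext i
  fin_cases i <;>
    simp only [lieBracket, eta1, eta2, fderiv_eta1_apply, fderiv_eta2_apply, Fin.isValue,
      Fin.zero_eta, Fin.mk_one, cons_val_zero, cons_val_one, cons_val_fin_one, Pi.sub_apply,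
      Pi.smul_apply, smul_eq_mul] <;> ring

theorem det_eta1_lieBracket_eta1_eta2 (p : Fin 2 → ℝ) :
    !![eta1 p 0, lieBracket eta1 eta2 p 0; eta1 p 1, lieBracket eta1 eta2 p 1].det
      = -12 * p 0 * p 1 * (1 - p 0) * (1 - p 1) * (p 0 * (1 - p 0) + p 1 * (1 - p 1)) := by
  rw [det_fin_two_of, lieBracket_eta1_eta2]
  simp only [eta1, Fin.isValue, cons_val_zero, cons_val_one, cons_val_fin_one, Pi.smul_apply,
    smul_eq_mul]
  ring

/-- (Regulated Matching Pennies example.) The Lie bracket of `η₁, η₂` is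
`[η₁, η₂](α, β) = -12αβ(1-α)(1-β)·(1,1)`, and on `(0,1)²` the determinant of the matrix with
columns `η₁` and `[η₁, η₂]` equals `-12αβ(1-α)(1-β)(α(1-α)+β(1-β)) ≠ 0`; hence `η₁(α, β)`
and `[η₁, η₂](α, β)` are linearly independent there. -/
theorem stmt18 :
    (∀ p : Fin 2 → ℝ,
      lieBracket eta1 eta2 p
        = (-12 * p 0 * p 1 * (1 - p 0) * (1 - p 1)) • (![1, 1] : Fin 2 → ℝ)) ∧
    (∀ p : Fin 2 → ℝ, 0 < p 0 → p 0 < 1 → 0 < p 1 → p 1 < 1 →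
      (Matrix.det !![eta1 p 0, lieBracket eta1 eta2 p 0;
                     eta1 p 1, lieBracket eta1 eta2 p 1]
          = -12 * p 0 * p 1 * (1 - p 0) * (1 - p 1)
              * (p 0 * (1 - p 0) + p 1 * (1 - p 1))) ∧
      Matrix.det !![eta1 p 0, lieBracket eta1 eta2 p 0;
                    eta1 p 1, lieBracket eta1 eta2 p 1] ≠ 0 ∧
      LinearIndependent ℝ ![eta1 p, lieBracket eta1 eta2 p]) := by
  refine ⟨lieBracket_eta1_eta2, fun p hα₀ hα₁ hβ₀ hβ₁ => ?_⟩
  have hα : 0 < 1 - p 0 := sub_pos.2 hα₁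
  have hβ : 0 < 1 - p 1 := sub_pos.2 hβ₁
  have hdet :
      !![eta1 p 0, lieBracket eta1 eta2 p 0; eta1 p 1, lieBracket eta1 eta2 p 1].det ≠ 0 := by
    rw [det_eta1_lieBracket_eta1_eta2]
    simp only [neg_mul, neg_ne_zero]
    positivity
  exact ⟨det_eta1_lieBracket_eta1_eta2 p, hdet,
    (linearIndependent_pair_iff_det_ne_zero _ _).2 hdet⟩
end
end
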